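/- arXiv:1307.0966 — 8 statements merged into one kernel-verified Lean document; each statement's English description precedes it below -/
import Mathlib

section
/- The symmetric piecewise constant density g with g(x) = M₀ e^{-iε} on the band d + (i-1)Δ < |x| ≤ d + iΔ and g(x) = M₀ on [-d, d] satisfies the ε-differential privacy condition: for all x, y ∈ ℝ with |x - y| ≤ Δ, g(x) ≤ e^ε g(y). -/
/-!
Up to the factor `M₀`, the density is `exp (-(n x) * ε)` where `n x = ⌈(|x| - d) / Δ⌉₊` is the index
of the band containing `x` (band `0` being `[-d, d]`). Moving by at most `Δ` changes `|x|` by at most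
`Δ`, hence raises the band index by at most one, and so lowers the density by at most a factor `e^ε`.
-/

open Real

/-- The index of the band containing `x`: `0` on `[-d, d]`, and `i` on `d + (i - 1)Δ < |x| ≤ d + iΔ`. -/
noncomputable def bandIndex (d Δ x : ℝ) : ℕ := ⌈(|x| - d) / Δ⌉₊

section bandIndex

variable {d Δ : ℝ}

lemma bandIndex_eq_zero {x : ℝ} (hΔ : 0 < Δ) (hx : |x| ≤ d) : bandIndex d Δ x = 0 :=
  Nat.ceil_eq_zero.mpr (div_nonpos_of_nonpos_of_nonneg (by linarith) hΔ.le)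

lemma one_le_bandIndex {x : ℝ} (hΔ : 0 < Δ) (hx : d < |x|) : 1 ≤ bandIndex d Δ x :=
  Nat.ceil_pos.mpr (div_pos (by linarith) hΔ)

lemma abs_le_add_bandIndex_mul (x : ℝ) (hΔ : 0 < Δ) : |x| ≤ d + bandIndex d Δ x * Δ := by
  have h := (div_le_iff₀ hΔ).mp (Nat.le_ceil ((|x| - d) / Δ))
  rw [bandIndex]
  linarith

lemma add_bandIndex_sub_one_mul_lt_abs {x : ℝ} (hΔ : 0 < Δ) (hx : d < |x|) :
    d + (bandIndex d Δ x - 1) * Δ < |x| := by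
  have h := Nat.ceil_lt_add_one (div_pos (sub_pos.mpr hx) hΔ).le
  rw [← sub_lt_iff_lt_add, lt_div_iff₀ hΔ] at h
  rw [bandIndex]
  linarith

lemma bandIndex_le_succ {x y : ℝ} (hΔ : 0 < Δ) (hxy : |x - y| ≤ Δ) :
    bandIndex d Δ y ≤ bandIndex d Δ x + 1 := by
  have hy : |y| ≤ |x| + Δ := by
    have := abs_sub_abs_le_abs_sub y x
    rw [abs_sub_comm y x] at this
    linarith
  have hx := abs_le_add_bandIndex_mul (d := d) x hΔ
  refine Nat.ceil_le.mpr ((div_le_iff₀ hΔ).mpr ?_)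
  push_cast
  linarith

end bandIndex

lemma eq_mul_exp_bandIndex {ε Δ d M₀ : ℝ} (hΔ : 0 < Δ) {g : ℝ → ℝ}
    (hg0 : ∀ x : ℝ, |x| ≤ d → g x = M₀)
    (hgi : ∀ (i : ℕ) (x : ℝ), 1 ≤ i →
      d + ((i : ℝ) - 1) * Δ < |x| → |x| ≤ d + (i : ℝ) * Δ →
      g x = M₀ * exp (-(i : ℝ) * ε)) (x : ℝ) :
    g x = M₀ * exp (-(bandIndex d Δ x : ℝ) * ε) := by
  rcases le_or_gt |x| d with hx | hx
  · simp [hg0 x hx, bandIndex_eq_zero hΔ hx]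
  · exact hgi _ x (one_le_bandIndex hΔ hx) (add_bandIndex_sub_one_mul_lt_abs hΔ hx)
      (abs_le_add_bandIndex_mul x hΔ)

lemma mul_exp_neg_mul_le_exp_mul {ε M₀ : ℝ} (hε : 0 ≤ ε) (hM : 0 ≤ M₀) {m n : ℕ} (hmn : m ≤ n + 1) :
    M₀ * exp (-(n : ℝ) * ε) ≤ exp ε * (M₀ * exp (-(m : ℝ) * ε)) := by
  rw [mul_left_comm, ← exp_add]
  gcongr
  have : (m : ℝ) ≤ n + 1 := by exact_mod_cast hmn
  nlinarith

theorem stmt_3_general (ε Δ d M₀ : ℝ) (hε : 0 < ε) (hΔ : 0 < Δ)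
    (hM : 0 < M₀)
    (g : ℝ → ℝ)
    (hg0 : ∀ x : ℝ, |x| ≤ d → g x = M₀)
    (hgi : ∀ (i : ℕ) (x : ℝ), 1 ≤ i →
      d + ((i : ℝ) - 1) * Δ < |x| → |x| ≤ d + (i : ℝ) * Δ →
      g x = M₀ * Real.exp (-(i : ℝ) * ε)) :
    ∀ x y : ℝ, |x - y| ≤ Δ → g x ≤ Real.exp ε * g y := by
  intro x y hxy
  rw [eq_mul_exp_bandIndex hΔ hg0 hgi x, eq_mul_exp_bandIndex hΔ hg0 hgi y]
  exact mul_exp_neg_mul_le_exp_mul hε.le hM.le (bandIndex_le_succ hΔ hxy)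

theorem stmt_3 (ε Δ d M₀ : ℝ) (hε : 0 < ε) (hΔ : 0 < Δ)
    (hd : d ∈ Set.Icc 0 Δ) (hM : 0 < M₀)
    (hnorm : 2 * M₀ * (d + Δ * Real.exp (-ε) / (1 - Real.exp (-ε))) = 1)
    (g : ℝ → ℝ)
    (hg0 : ∀ x : ℝ, |x| ≤ d → g x = M₀)
    (hgi : ∀ (i : ℕ) (x : ℝ), 1 ≤ i →
      d + ((i : ℝ) - 1) * Δ < |x| → |x| ≤ d + (i : ℝ) * Δ →
      g x = M₀ * Real.exp (-(i : ℝ) * ε)) :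
    ∀ x y : ℝ, |x - y| ≤ Δ → g x ≤ Real.exp ε * g y :=
  stmt_3_general ε Δ d M₀ hε hΔ hM g hg0 hgi
end

section
/- Adding Laplace noise with mean 0 and scale Δ/ε achieves ε-differential privacy: if |a - b| ≤ Δ, then for the Laplace density p with scale Δ/ε and any measurable set S ⊆ ℝ, ∫_S p(x - a) dx ≤ e^ε ∫_S p(x - b) dx. -/
open MeasureTheory Real

/-! By the triangle inequality `|x - b| ≤ |x - a| + |a - b|`, the density ratio
`p (x - a) / p (x - b)` is at most `exp (ε |a - b| / Δ) ≤ exp ε` at every point `x`;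
integrating this pointwise bound over `S` gives the claim. -/

theorem integrable_exp_neg_mul_abs {c : ℝ} (hc : 0 < c) :
    Integrable fun x : ℝ => exp (-c * |x|) := by
  refine (Continuous.locallyIntegrable (by fun_prop))
    |>.integrable_of_isBigO_atTop_of_norm_isNegInvariant
    (g := fun x => exp (-c * x)) (Filter.Eventually.of_forall fun x => by simp) ?_ ?_
  · refine Filter.EventuallyEq.isBigO ?_
    filter_upwards [Filter.eventually_ge_atTop 0] with x hx
    rw [abs_of_nonneg hx]
  · exact integrableAtFilter_atTop_iff.2 ⟨0, (integrableOn_Ici_iff_integrableOn_Ioi).2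
      (by simpa only [neg_mul] using exp_neg_integrableOn_Ioi 0 hc)⟩

theorem exp_neg_mul_abs_sub_le {c : ℝ} (hc : 0 ≤ c) (x a b : ℝ) :
    exp (-c * |x - a|) ≤ exp (c * |a - b|) * exp (-c * |x - b|) := by
  rw [← exp_add, exp_le_exp]
  nlinarith [mul_le_mul_of_nonneg_left (abs_sub_le x a b) hc, abs_sub_comm x a]

theorem stmt_5 (ε Δ : ℝ) (hε : 0 < ε) (hΔ : 0 < Δ)
    (p : ℝ → ℝ) (hp : ∀ x, p x = ε / (2 * Δ) * Real.exp (-|x| * ε / Δ))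
    (a b : ℝ) (hab : |a - b| ≤ Δ) :
    ∀ S : Set ℝ, MeasurableSet S →
      (∫ x in S, p (x - a)) ≤ Real.exp ε * ∫ x in S, p (x - b) := by
  intro S _
  have hc : 0 < ε / Δ := div_pos hε hΔ
  have hp' : ∀ x, p x = ε / (2 * Δ) * exp (-(ε / Δ) * |x|) := fun x => by rw [hp]; congr 2; ring
  have hInt : ∀ t, Integrable fun x => p (x - t) := fun t => by
    simp_rw [hp']
    exact ((integrable_exp_neg_mul_abs hc).const_mul _).comp_sub_right t
  have hshift : exp (ε / Δ * |a - b|) ≤ exp ε := by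
    rw [exp_le_exp, div_mul_eq_mul_div, div_le_iff₀ hΔ]
    exact mul_le_mul_of_nonneg_left hab hε.le
  rw [← integral_const_mul]
  refine setIntegral_mono (hInt a).integrableOn ((hInt b).const_mul _).integrableOn fun x => ?_
  calc p (x - a)
      ≤ ε / (2 * Δ) * (exp (ε / Δ * |a - b|) * exp (-(ε / Δ) * |x - b|)) := by
        rw [hp']; gcongr; exact exp_neg_mul_abs_sub_le hc.le x a b
    _ ≤ ε / (2 * Δ) * (exp ε * exp (-(ε / Δ) * |x - b|)) := by gcongr
    _ = exp ε * p (x - b) := by rw [hp']; ring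
end

section
/- For ε = 1 and Δ = 1, the variance of the optimal piecewise constant noise distribution, minimized over the parameter d ∈ [0,1], is strictly less than 2, the variance of the Laplace(0,1) distribution. -/
/-!
At `d = 1/2` the series is a combination of `∑ qⁱ`, `∑ i qⁱ` and `∑ i² qⁱ` with `q = e⁻¹`, which
gives `V(1/2) = (1 + 23q + 23q² + q³) / (12 (1 + q) (1 - q)²)`. This is below `2` as soon as
`q < 10/27`, and `e⁻¹ ≈ 0.3679` is. Since every `V(d)` is nonnegative, the infimum is at most `V(1/2)`.
-/

open MeasureTheory Real

theorem hasSum_sq_mul_geometric_of_norm_lt_one {𝕜 : Type*} [NormedField 𝕜] {r : 𝕜}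
    (hr : ‖r‖ < 1) : HasSum (fun n : ℕ ↦ (n : 𝕜) ^ 2 * r ^ n) (r * (1 + r) / (1 - r) ^ 3) := by
  have h1r : 1 - r ≠ 0 := by
    intro h
    rw [sub_eq_zero] at h
    simp [← h] at hr
  have hsum := ((hasSum_choose_mul_geometric_of_norm_lt_one 2 hr).mul_left 2 |>.sub
    ((hasSum_coe_mul_geometric_of_norm_lt_one hr).mul_left 3)).sub
    ((hasSum_geometric_of_norm_lt_one hr).mul_left 2)
  rw [show r * (1 + r) / (1 - r) ^ 3 = 2 * (1 / (1 - r) ^ (2 + 1)) - 3 * (r / (1 - r) ^ 2)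
      - 2 * (1 - r)⁻¹ by field_simp; ring]
  refine hsum.congr_fun fun n ↦ ?_
  -- `Nat.cast_choose_two` would divide by `2`, which may vanish in `𝕜`
  have hchoose : (n + 2).choose 2 * 2 = (n + 2) * (n + 1) := by
    have h := Nat.add_one_mul_choose_eq (n + 1) 1
    simp only [Nat.choose_one_right] at h
    linarith
  replace hchoose := congrArg (Nat.cast : ℕ → 𝕜) hchoose
  push_cast at hchoose
  linear_combination (-r ^ n) * hchoose

theorem integral_sq_add_one (a : ℝ) : ∫ x in a..a + 1, x ^ 2 = a ^ 2 + a + 1 / 3 := by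
  rw [integral_pow]
  ring

theorem hasSum_geometric_mul_integral_sq {q : ℝ} (hq : ‖q‖ < 1) (d : ℝ) :
    HasSum (fun i : ℕ ↦ q ^ i * ∫ x in (d + i)..(d + i + 1), x ^ 2)
      (q * (1 + q) / (1 - q) ^ 3 + (2 * d + 1) * (q / (1 - q) ^ 2)
        + (d ^ 2 + d + 1 / 3) * (1 - q)⁻¹) := by
  refine ((hasSum_sq_mul_geometric_of_norm_lt_one hq).add
    ((hasSum_coe_mul_geometric_of_norm_lt_one hq).mul_left (2 * d + 1))).add
    ((hasSum_geometric_of_norm_lt_one hq).mul_left (d ^ 2 + d + 1 / 3)) |>.congr_fun fun i ↦ ?_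
  rw [integral_sq_add_one]
  ring

/-- The variance `V(d)` of the optimal noise density, with `e⁻¹` replaced by a ratio `q`
(so that `e^{-i} = qⁱ`). -/
noncomputable def noiseVariance (q d : ℝ) : ℝ :=
  2 * (1 / (2 * (d + q / (1 - q)))) * (∫ x in (0:ℝ)..d, x ^ 2) +
    2 * (1 / (2 * (d + q / (1 - q)))) * q *
      ∑' i : ℕ, q ^ i * ∫ x in (d + (i : ℝ))..(d + (i : ℝ) + 1), x ^ 2

theorem noiseVariance_nonneg {q d : ℝ} (hq0 : 0 ≤ q) (hq1 : q < 1) (hd : 0 ≤ d) :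
    0 ≤ noiseVariance q d := by
  have hM : 0 ≤ 2 * (1 / (2 * (d + q / (1 - q)))) := by
    have : 0 ≤ q / (1 - q) := div_nonneg hq0 (by linarith)
    positivity
  have hI (a b : ℝ) (hab : a ≤ b) : 0 ≤ ∫ x in a..b, x ^ 2 :=
    intervalIntegral.integral_nonneg hab fun x _ ↦ sq_nonneg x
  have hS : 0 ≤ ∑' i : ℕ, q ^ i * ∫ x in (d + (i : ℝ))..(d + (i : ℝ) + 1), x ^ 2 :=
    tsum_nonneg fun i ↦ mul_nonneg (pow_nonneg hq0 i) (hI _ _ (by linarith))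
  have := hI 0 d hd
  unfold noiseVariance
  positivity

theorem noiseVariance_half {q : ℝ} (hq0 : 0 ≤ q) (hq1 : q < 1) :
    noiseVariance q (1 / 2) =
      (1 + 23 * q + 23 * q ^ 2 + q ^ 3) / (12 * (1 + q) * (1 - q) ^ 2) := by
  have hq : ‖q‖ < 1 := by rwa [Real.norm_of_nonneg hq0]
  have h1q : 1 - q ≠ 0 := by linarith
  have h1q' : 1 + q ≠ 0 := by linarith
  have hM : 1 / 2 + q / (1 - q) = (1 + q) / (2 * (1 - q)) := by
    field_simp
    ring
  rw [noiseVariance, hM, (hasSum_geometric_mul_integral_sq hq _).tsum_eq, integral_pow]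
  field_simp
  ring

theorem noiseVariance_half_lt_two {q : ℝ} (hq0 : 0 ≤ q) (hq : q < 10 / 27) :
    noiseVariance q (1 / 2) < 2 := by
  have h1q : 0 < 1 - q := by linarith
  rw [noiseVariance_half hq0 (by linarith), div_lt_iff₀ (by positivity)]
  -- `24 (1 + q) (1 - q)² - (1 + 23q + 23q² + q³) = 23 - 47q - 47q² + 23q³`
  nlinarith [mul_nonneg hq0 hq0, mul_nonneg (mul_nonneg hq0 hq0) hq0]

theorem stmt_8 :
    sInf {v : ℝ | ∃ d ∈ Set.Icc (0 : ℝ) 1, v =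
      2 * (1 / (2 * (d + Real.exp (-1) / (1 - Real.exp (-1))))) * (∫ x in (0:ℝ)..d, x ^ 2) +
      2 * (1 / (2 * (d + Real.exp (-1) / (1 - Real.exp (-1))))) * Real.exp (-1) *
        ∑' i : ℕ, Real.exp (-(i : ℝ)) * ∫ x in (d + (i : ℝ))..(d + (i : ℝ) + 1), x ^ 2} < 2 := by
  have hexp (i : ℕ) : exp (-(i : ℝ)) = exp (-1) ^ i := by
    rw [← exp_nat_mul]
    ring_nf
  simp only [hexp]
  change sInf {v | ∃ d ∈ Set.Icc (0 : ℝ) 1, v = noiseVariance (exp (-1)) d} < 2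
  have hq0 : 0 ≤ exp (-1) := (exp_pos _).le
  have hq : exp (-1) < 10 / 27 := exp_neg_one_lt_d9.trans (by norm_num)
  have hbdd : BddBelow {v | ∃ d ∈ Set.Icc (0 : ℝ) 1, v = noiseVariance (exp (-1)) d} := by
    refine ⟨0, ?_⟩
    rintro v ⟨d, hd, rfl⟩
    exact noiseVariance_nonneg hq0 (by linarith) hd.1
  calc _ ≤ noiseVariance (exp (-1)) (1 / 2) := csInf_le hbdd ⟨1 / 2, by norm_num, rfl⟩
    _ < 2 := noiseVariance_half_lt_two hq0 hq
end

section
/- Sequential composition of differential privacy: if mechanism κ₁ provides ε₁-DP and, for each possible output of κ₁, mechanism κ₂ provides ε₂-DP, and κ₁ and κ₂ are independent given the data set, then the pair (κ₁, κ₂) provides (ε₁ + ε₂)-differential privacy. -/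
/-!
Setwise `ε`-differential privacy is the measure inequality `κ x ≤ e^ε • κ y`. The product of
measures is monotone in both factors and pulls out scalars from each, so the bounds of the two
mechanisms multiply: `e^ε₁ * e^ε₂ = e^(ε₁ + ε₂)`.
-/

open MeasureTheory Real

open scoped ENNReal

namespace MeasureTheory.Measure

variable {α β : Type*} [MeasurableSpace α] [MeasurableSpace β]

theorem le_smul_iff {μ ν : Measure α} {c : ℝ≥0∞} :
    μ ≤ c • ν ↔ ∀ s, MeasurableSet s → μ s ≤ c * ν s := by
  simp only [le_iff, smul_apply, smul_eq_mul]

theorem prod_le_smul_prod {μ μ' : Measure α} {ν ν' : Measure β} [SFinite ν'] {a b : ℝ≥0∞}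
    (hμ : μ ≤ a • μ') (hν : ν ≤ b • ν') : μ.prod ν ≤ (a * b) • μ'.prod ν' :=
  calc μ.prod ν ≤ (a • μ').prod (b • ν') := prod_mono hμ hν
    _ = (a * b) • μ'.prod ν' := by rw [prod_smul_left, prod_smul_right, smul_smul]

end MeasureTheory.Measure

section DifferentialPrivacy

variable {D Ω₁ Ω₂ : Type*} [MeasurableSpace Ω₁] [MeasurableSpace Ω₂]

def IsDiffPrivate (N : D → D → Prop) (ε : ℝ) (κ : D → Measure Ω₁) : Prop :=
  ∀ x y, N x y → κ x ≤ ENNReal.ofReal (exp ε) • κ y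

theorem isDiffPrivate_iff {N : D → D → Prop} {ε : ℝ} {κ : D → Measure Ω₁} :
    IsDiffPrivate N ε κ ↔ ∀ x y, N x y → ∀ S, MeasurableSet S →
      κ x S ≤ ENNReal.ofReal (exp ε) * κ y S := by
  simp only [IsDiffPrivate, Measure.le_smul_iff]

theorem IsDiffPrivate.prod {N : D → D → Prop} {ε₁ ε₂ : ℝ} {κ₁ : D → Measure Ω₁}
    {κ₂ : D → Measure Ω₂} [∀ x, SFinite (κ₂ x)]
    (h₁ : IsDiffPrivate N ε₁ κ₁) (h₂ : IsDiffPrivate N ε₂ κ₂) :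
    IsDiffPrivate N (ε₁ + ε₂) fun x ↦ (κ₁ x).prod (κ₂ x) := by
  intro x y hxy
  rw [exp_add, ENNReal.ofReal_mul (exp_nonneg _)]
  exact Measure.prod_le_smul_prod (h₁ x y hxy) (h₂ x y hxy)

end DifferentialPrivacy

theorem stmt_11_general {Dt Ω₁ Ω₂ : Type*} [MeasurableSpace Ω₁] [MeasurableSpace Ω₂]
    (Neighbor : Dt → Dt → Prop) (ε₁ ε₂ : ℝ)
    (κ₁ : Dt → Measure Ω₁) (κ₂ : Dt → Measure Ω₂)
    (hκ₂ : ∀ x, IsProbabilityMeasure (κ₂ x))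
    (h₁ : ∀ x y : Dt, Neighbor x y → ∀ S : Set Ω₁, MeasurableSet S →
      κ₁ x S ≤ ENNReal.ofReal (Real.exp ε₁) * κ₁ y S)
    (h₂ : ∀ x y : Dt, Neighbor x y → ∀ S : Set Ω₂, MeasurableSet S →
      κ₂ x S ≤ ENNReal.ofReal (Real.exp ε₂) * κ₂ y S) :
    ∀ x y : Dt, Neighbor x y → ∀ S : Set (Ω₁ × Ω₂), MeasurableSet S →
      (κ₁ x).prod (κ₂ x) S ≤ ENNReal.ofReal (Real.exp (ε₁ + ε₂)) * (κ₁ y).prod (κ₂ y) S :=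
  isDiffPrivate_iff.1 <| (isDiffPrivate_iff.2 h₁).prod (isDiffPrivate_iff.2 h₂)

theorem stmt_11 {Dt Ω₁ Ω₂ : Type*} [MeasurableSpace Ω₁] [MeasurableSpace Ω₂]
    (Neighbor : Dt → Dt → Prop) (ε₁ ε₂ : ℝ)
    (κ₁ : Dt → Measure Ω₁) (κ₂ : Dt → Measure Ω₂)
    (hκ₁ : ∀ x, IsProbabilityMeasure (κ₁ x)) (hκ₂ : ∀ x, IsProbabilityMeasure (κ₂ x))
    (h₁ : ∀ x y : Dt, Neighbor x y → ∀ S : Set Ω₁, MeasurableSet S →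
      κ₁ x S ≤ ENNReal.ofReal (Real.exp ε₁) * κ₁ y S)
    (h₂ : ∀ x y : Dt, Neighbor x y → ∀ S : Set Ω₂, MeasurableSet S →
      κ₂ x S ≤ ENNReal.ofReal (Real.exp ε₂) * κ₂ y S) :
    ∀ x y : Dt, Neighbor x y → ∀ S : Set (Ω₁ × Ω₂), MeasurableSet S →
      (κ₁ x).prod (κ₂ x) S ≤ ENNReal.ofReal (Real.exp (ε₁ + ε₂)) * (κ₁ y).prod (κ₂ y) S :=
  stmt_11_general Neighbor ε₁ ε₂ κ₁ κ₂ hκ₂ h₁ h₂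
end

section
/- Knowledge refinement mechanism achieves differential privacy: let P be a probability measure (prior knowledge) on a measurable space, let α_u ≥ 1 and α_d ≤ 1 satisfy α_u = e^ε α_d, and suppose for every possible true answer a there is a measurable set U_a with α_u P(U_a) + α_d (1 - P(U_a)) = 1. Then the family of measures Q_a defined by Q_a(S) = α_u P(S ∩ U_a) + α_d P(S \ U_a) are probability measures satisfying Q_a(S) ≤ e^ε Q_b(S) for all answers a, b and all measurable S. -/
/-! Splitting a set `S` along `U`, the refined mass of `S` lies between `αd • P S` and `αu • P S`,
for every environment `U`. Since `αu = e^ε αd`, the refined masses of `S` for two different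
answers are therefore within a factor `e^ε` of each other. -/

open MeasureTheory Real

namespace MeasureTheory.Measure

variable {Ω : Type*} [MeasurableSpace Ω]

/-- The mechanism's output distribution `Q_a(S)`, for `μ = P`, `U = U_a`, `u = αu`, `d = αd`. -/
noncomputable def reweightReal (μ : Measure Ω) (U : Set Ω) (u d : ℝ) (S : Set Ω) : ℝ :=
  u * μ.real (S ∩ U) + d * μ.real (S \ U)

variable {μ : Measure Ω} {U : Set Ω} {u d : ℝ}

theorem reweightReal_univ [IsProbabilityMeasure μ] (hU : MeasurableSet U) :
    μ.reweightReal U u d Set.univ = u * μ.real U + d * (1 - μ.real U) := by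
  rw [reweightReal, Set.univ_inter, ← Set.compl_eq_univ_sdiff, probReal_compl_eq_one_sub hU]

theorem reweightReal_nonneg (hu : 0 ≤ u) (hd : 0 ≤ d) (S : Set Ω) :
    0 ≤ μ.reweightReal U u d S := by
  unfold reweightReal
  positivity

theorem reweightReal_le [IsFiniteMeasure μ] (hU : MeasurableSet U) (hdu : d ≤ u) (S : Set Ω) :
    μ.reweightReal U u d S ≤ u * μ.real S := by
  rw [reweightReal, ← measureReal_inter_add_sdiff (s := S) hU, mul_add]
  gcongr

theorem le_reweightReal [IsFiniteMeasure μ] (hU : MeasurableSet U) (hdu : d ≤ u) (S : Set Ω) :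
    d * μ.real S ≤ μ.reweightReal U u d S := by
  rw [reweightReal, ← measureReal_inter_add_sdiff (s := S) hU, mul_add]
  gcongr

end MeasureTheory.Measure

theorem stmt_12_general {Ω A : Type*} [MeasurableSpace Ω]
    (ε : ℝ)
    (P : Measure Ω) [IsProbabilityMeasure P]
    (αu αd : ℝ) (hαu : 1 ≤ αu) (hαd0 : 0 ≤ αd) (hαd : αd ≤ 1)
    (hrel : αu = Real.exp ε * αd)
    (U : A → Set Ω) (hU : ∀ a, MeasurableSet (U a))
    (hmass : ∀ a, αu * (P (U a)).toReal + αd * (1 - (P (U a)).toReal) = 1)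
    (Q : A → Set Ω → ℝ)
    (hQ : ∀ a S, Q a S = αu * (P (S ∩ U a)).toReal + αd * (P (S \ U a)).toReal) :
    (∀ a, Q a Set.univ = 1) ∧
    (∀ a S, 0 ≤ Q a S) ∧
    (∀ a b : A, ∀ S : Set Ω, MeasurableSet S → Q a S ≤ Real.exp ε * Q b S) := by
  obtain rfl : Q = fun a => P.reweightReal (U a) αu αd := funext₂ hQ
  have hdu : αd ≤ αu := hαd.trans hαu
  refine ⟨fun a => (Measure.reweightReal_univ (hU a)).trans (hmass a),
    fun a => Measure.reweightReal_nonneg (zero_le_one.trans hαu) hαd0, fun a b S _ => ?_⟩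
  calc P.reweightReal (U a) αu αd S ≤ αu * P.real S := Measure.reweightReal_le (hU a) hdu S
    _ = Real.exp ε * (αd * P.real S) := by rw [hrel, mul_assoc]
    _ ≤ Real.exp ε * P.reweightReal (U b) αu αd S := by
      gcongr
      exact Measure.le_reweightReal (hU b) hdu S

theorem stmt_12 {Ω A : Type*} [MeasurableSpace Ω]
    (ε : ℝ) (hε : 0 < ε)
    (P : Measure Ω) [IsProbabilityMeasure P]
    (αu αd : ℝ) (hαu : 1 ≤ αu) (hαd0 : 0 ≤ αd) (hαd : αd ≤ 1)
    (hrel : αu = Real.exp ε * αd)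
    (U : A → Set Ω) (hU : ∀ a, MeasurableSet (U a))
    (hmass : ∀ a, αu * (P (U a)).toReal + αd * (1 - (P (U a)).toReal) = 1)
    (Q : A → Set Ω → ℝ)
    (hQ : ∀ a S, Q a S = αu * (P (S ∩ U a)).toReal + αd * (P (S \ U a)).toReal) :
    (∀ a, Q a Set.univ = 1) ∧
    (∀ a S, 0 ≤ Q a S) ∧
    (∀ a b : A, ∀ S : Set Ω, MeasurableSet S → Q a S ≤ Real.exp ε * Q b S) :=
  stmt_12_general ε P αu αd hαu hαd0 hαd hrel U hU hmass Q hQ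
end

section
/- Consider a microaggregation that, given a totally ordered finite multiset X of size n, repeatedly removes the k smallest elements as a cluster while at least 2k elements remain (the remainder forming the last cluster). If X' is obtained from X by replacing one element, then there is a bijection between the clusters of X and the clusters of X' such that corresponding clusters differ in at most one element. -/
/-- Order-based microaggregation on a sorted list: repeatedly remove the first
`k` elements as a cluster while at least `2*k` elements remain; the remaining
elements form the last cluster. -/
def clustersMA {α : Type*} (k : ℕ) (l : List α) : List (List α) :=
  if h : 2 * k ≤ l.length ∧ 0 < k then
    l.take k :: clustersMA k (l.drop k)
  else [l]
termination_by l.length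
decreasing_by
  simp only [List.length_drop]
  omega

/-!
Write `X = a ::ₘ Y` and `X' = b ::ₘ Y` with, say, `a ≤ b`. Both sorted lists arise by inserting
one element into `sort Y`, `a` no later than `b`, so every prefix of `sort X'` together with `a`
is the prefix of `sort X` of the same length together with a single element. The number of
clusters depends only on the length, and a cluster is the difference of two consecutive prefixes,
so this exchange property passes from prefixes to clusters; after the first cluster is cut off it
holds again for the remainders, with `a` replaced by the element it was exchanged for.
-/

section

open List

variable {α : Type*}

def DifferInAtMostOne [DecidableEq α] (C C' : List α) : Prop :=
  Multiset.card (((C : Multiset α) - (C' : Multiset α)) + ((C' : Multiset α) - (C : Multiset α)))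
    ≤ 2

theorem DifferInAtMostOne.symm [DecidableEq α] {C C' : List α} (h : DifferInAtMostOne C C') :
    DifferInAtMostOne C' C := by
  rwa [DifferInAtMostOne, add_comm]

theorem differInAtMostOne_of_add_singleton_eq [DecidableEq α] {C C' : List α} {c d : α}
    (h : (C' : Multiset α) + {c} = C + {d}) : DifferInAtMostOne C C' := by
  have h₁ : (C : Multiset α) - C' ≤ {c} := by
    rw [tsub_le_iff_left, h]
    exact Multiset.le_add_right _ _
  have h₂ : (C' : Multiset α) - C ≤ {d} := by
    rw [tsub_le_iff_left, ← h]
    exact Multiset.le_add_right _ _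
  exact (Multiset.card_le_card (add_le_add h₁ h₂)).trans_eq (by simp)

def PrefixExchange (a : α) (l l' : List α) : Prop :=
  ∀ t, ∃ c, ((l'.take t : List α) : Multiset α) + {a} = (l.take t : Multiset α) + {c}

theorem PrefixExchange.drop {a c : α} {l l' : List α} (h : PrefixExchange a l l') {k : ℕ}
    (hk : ((l'.take k : List α) : Multiset α) + {a} = (l.take k : Multiset α) + {c}) :
    PrefixExchange c (l.drop k) (l'.drop k) := by
  intro t
  obtain ⟨d, hd⟩ := h (k + t)
  rw [take_add, take_add, ← Multiset.coe_add, ← Multiset.coe_add] at hd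
  refine ⟨d, add_left_cancel (a := ((l.take k : List α) : Multiset α)) ?_⟩
  calc ((l.take k : List α) : Multiset α) + (((l'.drop k).take t : List α) + {c})
      = ((l'.take k : List α) + {a}) + ((l'.drop k).take t : List α) := by rw [hk]; abel
    _ = _ := by rw [add_right_comm, hd, add_assoc]

theorem forall₂_clustersMA_of_prefixExchange [DecidableEq α] (k : ℕ) {l l' : List α}
    (hlen : l.length = l'.length) {a : α} (h : PrefixExchange a l l') :
    Forall₂ DifferInAtMostOne (clustersMA k l) (clustersMA k l') := by
  induction l using clustersMA.induct k generalizing l' a with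
  | case1 l hl ih =>
    obtain ⟨c, hc⟩ := h k
    rw [clustersMA.eq_def k l, dif_pos hl, clustersMA.eq_def k l', dif_pos (hlen ▸ hl)]
    exact .cons (differInAtMostOne_of_add_singleton_eq hc) (ih (by simp [hlen]) (h.drop hc))
  | case2 l hl =>
    obtain ⟨c, hc⟩ := h l.length
    rw [take_length, hlen, take_length] at hc
    rw [clustersMA.eq_def k l, dif_neg hl, clustersMA.eq_def k l', dif_neg (hlen ▸ hl)]
    exact .cons (differInAtMostOne_of_add_singleton_eq hc) .nil

theorem prefixExchange_orderedInsert [LinearOrder α] {m : List α} (hm : m.Pairwise (· ≤ ·))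
    {a b : α} (hab : a ≤ b) :
    PrefixExchange a (m.orderedInsert (· ≤ ·) a) (m.orderedInsert (· ≤ ·) b) := by
  induction m generalizing a with
  | nil =>
    rintro (_ | t)
    · exact ⟨a, by simp⟩
    · exact ⟨b, by simp [add_comm]⟩
  | cons x m ih =>
    rintro (_ | t)
    · exact ⟨a, by simp⟩
    by_cases hbx : b ≤ x
    · refine ⟨b, ?_⟩
      simp only [orderedInsert_cons_of_le _ _ hbx, orderedInsert_cons_of_le _ _ (hab.trans hbx),
        take_succ_cons, ← Multiset.cons_coe, ← Multiset.singleton_add]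
      abel
    by_cases hax : a ≤ x
    · -- `a` goes in front of `x` and `b` behind it; inserting `x` itself changes nothing.
      obtain ⟨c, hc⟩ := ih hm.of_cons (le_of_not_ge hbx) t
      have hxm : m.orderedInsert (· ≤ ·) x = x :: m := by
        cases m with
        | nil => rfl
        | cons y m => exact orderedInsert_cons_of_le _ _ (rel_of_pairwise_cons hm mem_cons_self)
      rw [hxm] at hc
      refine ⟨c, ?_⟩
      simp only [orderedInsert_cons_of_le _ _ hax, orderedInsert_of_not_le _ _ hbx,
        take_succ_cons, ← Multiset.cons_coe, ← Multiset.singleton_add]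
      rw [add_comm ({x} : Multiset α), hc]
      abel
    · obtain ⟨c, hc⟩ := ih hm.of_cons hab t
      refine ⟨c, ?_⟩
      simp only [orderedInsert_of_not_le _ _ hax, orderedInsert_of_not_le _ _ hbx,
        take_succ_cons, ← Multiset.cons_coe, Multiset.cons_add, hc]

theorem Multiset.sort_cons_eq_orderedInsert [LinearOrder α] (a : α) (s : Multiset α) :
    (a ::ₘ s).sort (· ≤ ·) = (s.sort (· ≤ ·)).orderedInsert (· ≤ ·) a :=
  Perm.eq_of_pairwise' (Multiset.pairwise_sort _ _)
    ((Multiset.pairwise_sort _ _).orderedInsert _ _)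
    (Multiset.coe_eq_coe.mp (by
      rw [Multiset.sort_eq, Multiset.coe_eq_coe.mpr (perm_orderedInsert _ _ _),
        ← Multiset.cons_coe, Multiset.sort_eq]))

theorem forall₂_clustersMA_sort_cons [LinearOrder α] (k : ℕ) (s : Multiset α) (a b : α) :
    Forall₂ DifferInAtMostOne
      (clustersMA k ((a ::ₘ s).sort (· ≤ ·))) (clustersMA k ((b ::ₘ s).sort (· ≤ ·))) := by
  wlog hab : a ≤ b generalizing a b
  · exact .flip ((this b a (le_of_not_ge hab)).imp fun _ _ h => h.symm)
  rw [Multiset.sort_cons_eq_orderedInsert, Multiset.sort_cons_eq_orderedInsert]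
  exact forall₂_clustersMA_of_prefixExchange k (by simp only [orderedInsert_length])
    (prefixExchange_orderedInsert (Multiset.pairwise_sort _ _) hab)

end

theorem stmt_17_general {α : Type*} [LinearOrder α] (k : ℕ) (X X' : Multiset α)
    (a b : α) (ha : a ∈ X) (hX' : X' = X.erase a + {b}) :
    ∃ σ : Fin (clustersMA k (X.sort (· ≤ ·))).length ≃
          Fin (clustersMA k (X'.sort (· ≤ ·))).length,
      ∀ i : Fin (clustersMA k (X.sort (· ≤ ·))).length,
        Multiset.card
          ((((clustersMA k (X.sort (· ≤ ·))).get i : Multiset α) -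
              ((clustersMA k (X'.sort (· ≤ ·))).get (σ i) : Multiset α)) +
            (((clustersMA k (X'.sort (· ≤ ·))).get (σ i) : Multiset α) -
              ((clustersMA k (X.sort (· ≤ ·))).get i : Multiset α))) ≤ 2 := by
  have h := forall₂_clustersMA_sort_cons k (X.erase a) a b
  rw [Multiset.cons_erase ha, ← Multiset.singleton_add, add_comm, ← hX'] at h
  exact ⟨finCongr h.length_eq, fun i => h.get i.2 _⟩

theorem stmt_17 {α : Type*} [LinearOrder α]
    (k n : ℕ) (hk : 1 ≤ k) (hn : k ≤ n)
    (X X' : Multiset α) (hX : Multiset.card X = n)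
    (a b : α) (ha : a ∈ X) (hX' : X' = X.erase a + {b}) :
    ∃ σ : Fin (clustersMA k (X.sort (· ≤ ·))).length ≃
          Fin (clustersMA k (X'.sort (· ≤ ·))).length,
      ∀ i : Fin (clustersMA k (X.sort (· ≤ ·))).length,
        Multiset.card
          ((((clustersMA k (X.sort (· ≤ ·))).get i : Multiset α) -
              ((clustersMA k (X'.sort (· ≤ ·))).get (σ i) : Multiset α)) +
            (((clustersMA k (X'.sort (· ≤ ·))).get (σ i) : Multiset α) -
              ((clustersMA k (X.sort (· ≤ ·))).get i : Multiset α))) ≤ 2 :=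
  stmt_17_general k X X' a b ha hX'
end

section
/- Let M be an insensitive microaggregation on numerical data with minimal cluster size k computing each centroid as the arithmetic mean of its cluster, over a domain where each record's attribute values lie in a bounded range. If I_r is the query returning the attribute values of record r (with L₁-sensitivity Δ(I_r) equal to the range size), then the composed query I_r ∘ M has L₁-sensitivity at most Δ(I_r)/k. -/
/-!
Changing one record moves each attribute sum by at most the range of that attribute, and the
centroid divides the sum by the cluster size, which is at least `k`. Summing over attributes
gives the L₁ bound.
-/

open Finset

theorem Fintype.sum_sub_sum_eq_of_eq_off {ι M : Type*} [Fintype ι] [AddCommGroup M]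
    {f g : ι → M} {i₀ : ι} (h : ∀ i, i ≠ i₀ → f i = g i) :
    ∑ i, f i - ∑ i, g i = f i₀ - g i₀ := by
  rw [← sum_sub_distrib]
  exact Fintype.sum_eq_single i₀ fun i hi => by rw [h i hi, sub_self]

theorem abs_sum_sub_sum_le_of_eq_off {ι : Type*} [Fintype ι] {f g : ι → ℝ} {a b : ℝ} {i₀ : ι}
    (hf : f i₀ ∈ Set.Icc a b) (hg : g i₀ ∈ Set.Icc a b) (h : ∀ i, i ≠ i₀ → f i = g i) :
    |∑ i, f i - ∑ i, g i| ≤ b - a := by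
  rw [Fintype.sum_sub_sum_eq_of_eq_off h, ← Real.dist_eq]
  exact Real.dist_le_of_mem_Icc hf hg

theorem abs_sum_div_sub_sum_div_le_of_eq_off {ι : Type*} [Fintype ι] {f g : ι → ℝ}
    {a b k n : ℝ} {i₀ : ι} (hk : 0 < k) (hkn : k ≤ n)
    (hf : f i₀ ∈ Set.Icc a b) (hg : g i₀ ∈ Set.Icc a b) (h : ∀ i, i ≠ i₀ → f i = g i) :
    |(∑ i, f i) / n - (∑ i, g i) / n| ≤ (b - a) / k := by
  have hsum := abs_sum_sub_sum_le_of_eq_off hf hg h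
  have hn : 0 < n := hk.trans_le hkn
  calc |(∑ i, f i) / n - (∑ i, g i) / n| = |∑ i, f i - ∑ i, g i| / n := by
        rw [div_sub_div_same, abs_div, abs_of_pos hn]
    _ ≤ (b - a) / n := div_le_div_of_nonneg_right hsum hn.le
    _ ≤ (b - a) / k := div_le_div_of_nonneg_left ((abs_nonneg _).trans hsum) hk hkn

theorem stmt_18 (m N k : ℕ) (hk : 0 < k) (hkN : k ≤ N)
    (lo hi : Fin m → ℝ)
    (C C' : Fin N → Fin m → ℝ)
    (hC : ∀ i j, C i j ∈ Set.Icc (lo j) (hi j))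
    (hC' : ∀ i j, C' i j ∈ Set.Icc (lo j) (hi j))
    (hdiff : ∃ i₀ : Fin N, ∀ i : Fin N, i ≠ i₀ → C i = C' i) :
    ∑ j, |(∑ i, C i j) / (N : ℝ) - (∑ i, C' i j) / (N : ℝ)| ≤
      (∑ j, (hi j - lo j)) / (k : ℝ) := by
  obtain ⟨i₀, h⟩ := hdiff
  rw [sum_div]
  exact sum_le_sum fun j _ =>
    abs_sum_div_sub_sum_div_le_of_eq_off (by exact_mod_cast hk) (by exact_mod_cast hkN)
      (hC i₀ j) (hC' i₀ j) fun i hi => congrFun (h i hi) j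
end

section
/- For a bivariate query with difference set S_f = [-s₁, s₁] × [-s₂, s₂], define sets S₀ = [-z₁,z₁] × [-z₂,z₂] ⊆ S_f and S_{i+1} = (S_i + S_f) \ ∪_{j≤i} S_j, and the density g(x) = M e^{-iε} for x ∈ S_i (M normalizing). Then for any x ∈ ℝ² and any δ ∈ S_f, if x ∈ S_i then x + δ ∈ S_{i-1} ∪ S_i ∪ S_{i+1}, and consequently g(x) ≤ e^ε g(x + δ). -/
/-!
The layers `S i` are pairwise disjoint, and a step `δ ∈ S_f` moves a point of `S i` into some
`S j` with `j ≤ i + 1`, since `S (i + 1)` collects everything reachable from `S i` in one step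
that is not yet in an earlier layer. As `S_f` is symmetric, the step `-δ` leads back, so also
`i ≤ j + 1`. The density drops by a factor `e^{-ε}` per layer, hence by at most `e^{-ε}`
along `δ`.
-/

open Real Pointwise

section Layers

variable {G : Type*} [AddCommGroup G]

def IsLayering (D : Set G) (S : ℕ → Set G) : Prop :=
  ∀ i : ℕ, S (i + 1) = (S i + D) \ ⋃ j ∈ Finset.range (i + 1), S j

variable {D : Set G} {S : ℕ → Set G}

theorem not_mem_layer_of_lt (hS : IsLayering D S) {j k : ℕ} (hjk : j < k) {y : G}
    (hy : y ∈ S j) : y ∉ S k := by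
  obtain ⟨m, rfl⟩ : ∃ m, k = m + 1 := ⟨k - 1, by omega⟩
  rw [hS]
  exact fun h ↦ h.2 (Set.mem_iUnion₂.mpr ⟨j, Finset.mem_range.mpr (by omega), hy⟩)

theorem exists_le_succ_add_mem_layer (hS : IsLayering D S) {k : ℕ} {y d : G} (hy : y ∈ S k)
    (hd : d ∈ D) : ∃ j ≤ k + 1, y + d ∈ S j := by
  by_cases h : y + d ∈ ⋃ j ∈ Finset.range (k + 1), S j
  · obtain ⟨j, hj, hmem⟩ := Set.mem_iUnion₂.mp h
    exact ⟨j, (Finset.mem_range.mp hj).le, hmem⟩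
  · exact ⟨k + 1, le_rfl, by rw [hS]; exact ⟨Set.add_mem_add hy hd, h⟩⟩

theorem exists_adjacent_layer_add_mem (hS : IsLayering D S) {i : ℕ} {x d : G} (hx : x ∈ S i)
    (hd : d ∈ D) (hnd : -d ∈ D) : ∃ j, x + d ∈ S j ∧ i ≤ j + 1 ∧ j ≤ i + 1 := by
  obtain ⟨j, hji, hj⟩ := exists_le_succ_add_mem_layer hS hx hd
  refine ⟨j, hj, ?_, hji⟩
  by_contra! hij
  obtain ⟨k, hkj, hk⟩ := exists_le_succ_add_mem_layer hS hj hnd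
  rw [add_neg_cancel_right] at hk
  exact not_mem_layer_of_lt hS (by omega) hk hx

theorem add_mem_adjacent_layers (hS : IsLayering D S) {i : ℕ} {x d : G} (hx : x ∈ S i)
    (hd : d ∈ D) (hnd : -d ∈ D) : x + d ∈ S (i - 1) ∪ S i ∪ S (i + 1) := by
  obtain ⟨j, hj, hij, hji⟩ := exists_adjacent_layer_add_mem hS hx hd hnd
  obtain rfl | rfl | rfl : j = i - 1 ∨ j = i ∨ j = i + 1 := by omega
  exacts [Or.inl (Or.inl hj), Or.inl (Or.inr hj), Or.inr hj]

end Layers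

theorem neg_mem_Icc_prod_Icc {a b : ℝ} {δ : ℝ × ℝ}
    (hδ : δ ∈ Set.Icc (-a) a ×ˢ Set.Icc (-b) b) :
    -δ ∈ Set.Icc (-a) a ×ˢ Set.Icc (-b) b := by
  obtain ⟨⟨h₁, h₂⟩, h₃, h₄⟩ := hδ
  exact ⟨⟨neg_le_neg h₂, by simpa using neg_le_neg h₁⟩,
    ⟨neg_le_neg h₄, by simpa using neg_le_neg h₃⟩⟩

theorem mul_exp_neg_mul_le_exp_mul_s19 {ε M : ℝ} (hε : 0 ≤ ε) (hM : 0 ≤ M) {i j : ℕ}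
    (hji : j ≤ i + 1) : M * exp (-(i : ℝ) * ε) ≤ exp ε * (M * exp (-(j : ℝ) * ε)) := by
  have hj : (j : ℝ) ≤ i + 1 := by exact_mod_cast hji
  calc M * exp (-(i : ℝ) * ε) ≤ M * exp (ε + -(j : ℝ) * ε) := by gcongr; nlinarith
    _ = exp ε * (M * exp (-(j : ℝ) * ε)) := by rw [exp_add]; ring

theorem stmt_19_general (ε s₁ s₂ M : ℝ) (hε : 0 < ε) (hM : 0 < M)
    (S : ℕ → Set (ℝ × ℝ))
    (hSrec : ∀ i : ℕ, S (i + 1) =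
      (S i + Set.Icc (-s₁) s₁ ×ˢ Set.Icc (-s₂) s₂) \ ⋃ j ∈ Finset.range (i + 1), S j)
    (g : ℝ × ℝ → ℝ)
    (hg : ∀ (i : ℕ) (x : ℝ × ℝ), x ∈ S i → g x = M * Real.exp (-(i : ℝ) * ε)) :
    ∀ (x δ : ℝ × ℝ), δ ∈ Set.Icc (-s₁) s₁ ×ˢ Set.Icc (-s₂) s₂ →
      ∀ i : ℕ, x ∈ S i →
        x + δ ∈ S (i - 1) ∪ S i ∪ S (i + 1) ∧ g x ≤ Real.exp ε * g (x + δ) := by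
  intro x δ hδ i hx
  have hnδ := neg_mem_Icc_prod_Icc hδ
  refine ⟨add_mem_adjacent_layers hSrec hx hδ hnδ, ?_⟩
  obtain ⟨j, hj, -, hji⟩ := exists_adjacent_layer_add_mem hSrec hx hδ hnδ
  rw [hg i x hx, hg j _ hj]
  exact mul_exp_neg_mul_le_exp_mul_s19 hε.le hM.le hji

theorem stmt_19 (ε s₁ s₂ z₁ z₂ M : ℝ) (hε : 0 < ε) (hM : 0 < M)
    (hz₁ : 0 < z₁) (hz₁s : z₁ ≤ s₁) (hz₂ : 0 < z₂) (hz₂s : z₂ ≤ s₂)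
    (S : ℕ → Set (ℝ × ℝ))
    (hS0 : S 0 = Set.Icc (-z₁) z₁ ×ˢ Set.Icc (-z₂) z₂)
    (hSrec : ∀ i : ℕ, S (i + 1) =
      (S i + Set.Icc (-s₁) s₁ ×ˢ Set.Icc (-s₂) s₂) \ ⋃ j ∈ Finset.range (i + 1), S j)
    (g : ℝ × ℝ → ℝ)
    (hg : ∀ (i : ℕ) (x : ℝ × ℝ), x ∈ S i → g x = M * Real.exp (-(i : ℝ) * ε)) :
    ∀ (x δ : ℝ × ℝ), δ ∈ Set.Icc (-s₁) s₁ ×ˢ Set.Icc (-s₂) s₂ →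
      ∀ i : ℕ, x ∈ S i →
        x + δ ∈ S (i - 1) ∪ S i ∪ S (i + 1) ∧ g x ≤ Real.exp ε * g (x + δ) :=
  stmt_19_general ε s₁ s₂ M hε hM S hSrec g hg
end
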